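/- arXiv:1405.0507 — 2 statements merged into one kernel-verified Lean document; each statement's English description precedes it below -/
import Mathlib

section
/- For all integers m ≥ 1 and n ≥ 1, the neutrix limit as ε → 0⁺ of ∫_ε^1 t^{-m-1} (log t)^n dt equals -n!/m^{n+1}; that is, there exists a negligible function N(ε) such that ∫_ε^1 t^{-m-1} (log t)^n dt − N(ε) tends to -n!/m^{n+1} as ε → 0⁺. -/
open MeasureTheory Real Filter Set

/-- A negligible function: a finite real linear combination of `ε ↦ ε^λ (log ε)^k`
with `λ < 0` real and `k ∈ ℕ`, and `ε ↦ (log ε)^k` with `k ≥ 1`. -/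
def Negligible (N : ℝ → ℝ) : Prop :=
  ∃ (s : Finset (ℝ × ℕ)) (c : ℝ × ℕ → ℝ) (T : Finset ℕ) (d : ℕ → ℝ),
    (∀ p ∈ s, p.1 < 0) ∧ (∀ k ∈ T, 1 ≤ k) ∧
    ∀ ε : ℝ, N ε = (∑ p ∈ s, c p * ε ^ p.1 * Real.log ε ^ p.2) +
      ∑ k ∈ T, d k * Real.log ε ^ k

/-- `NeutrixLim F c` : the neutrix limit of `F ε` as `ε → 0⁺` is `c`, i.e. there is a
negligible function `N` with `F ε − N ε → c` as `ε → 0⁺`. -/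
def NeutrixLim (F : ℝ → ℝ) (c : ℝ) : Prop :=
  ∃ N : ℝ → ℝ, Negligible N ∧
    Tendsto (fun ε => F ε - N ε) (nhdsWithin 0 (Set.Ioi 0)) (nhds c)

/-!
Integrating by parts against `v = t^(-a)/(-a)` lowers the power of the logarithm:
`∫_ε^1 t^(-a-1) (log t)^(n+1) dt`
  `= ε^(-a) (log ε)^(n+1) / a + (n+1)/a · ∫_ε^1 t^(-a-1) (log t)^n dt`.
By induction the integral is `ε^(-a)` times a polynomial in `log ε`, which is negligible
for `a > 0`, minus `n!/a^(n+1)`: the boundary term `1/a` at `t = 1` of the case `n = 0`,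
multiplied by the factors `(k+1)/a` of the recursion.
-/

open scoped Topology

lemma pos_of_mem_uIcc {a b x : ℝ} (ha : 0 < a) (hb : 0 < b) (hx : x ∈ uIcc a b) : 0 < x :=
  lt_of_lt_of_le (lt_min ha hb) hx.1

lemma hasDerivAt_rpow_neg_div {a t : ℝ} (ha : a ≠ 0) (ht : 0 < t) :
    HasDerivAt (fun x : ℝ => x ^ (-a) / -a) (t ^ (-a - 1)) t := by
  have h := (hasDerivAt_rpow_const (p := -a) (Or.inl ht.ne')).div_const (-a)
  rwa [mul_div_cancel_left₀ _ (neg_ne_zero.mpr ha)] at h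

lemma intervalIntegrable_rpow_mul_log_pow (a : ℝ) (k : ℕ) {ε b : ℝ} (hε : 0 < ε) (hb : 0 < b) :
    IntervalIntegrable (fun t : ℝ => t ^ a * log t ^ k) volume ε b := by
  refine ContinuousOn.intervalIntegrable fun x hx => ?_
  have hx : x ≠ 0 := (pos_of_mem_uIcc hε hb hx).ne'
  exact ((continuousAt_rpow_const x a (Or.inl hx)).mul
    ((continuousAt_log hx).pow k)).continuousWithinAt

lemma integral_rpow_neg_sub_one {a ε : ℝ} (ha : a ≠ 0) (hε : 0 < ε) :
    ∫ t in ε..1, t ^ (-a - 1) = (ε ^ (-a) - 1) / a := by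
  rw [intervalIntegral.integral_eq_sub_of_hasDerivAt
    (fun x hx => hasDerivAt_rpow_neg_div ha (pos_of_mem_uIcc hε one_pos hx))
    (by simpa using intervalIntegrable_rpow_mul_log_pow (-a - 1) 0 hε one_pos), one_rpow]
  field_simp
  ring

lemma integral_rpow_mul_log_pow_succ {a ε : ℝ} (ha : a ≠ 0) (hε : 0 < ε) (n : ℕ) :
    ∫ t in ε..1, t ^ (-a - 1) * log t ^ (n + 1) =
      ε ^ (-a) * log ε ^ (n + 1) / a + (n + 1) / a * ∫ t in ε..1, t ^ (-a - 1) * log t ^ n := by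
  have hu : ∀ x ∈ uIcc ε 1,
      HasDerivAt (fun x => log x ^ (n + 1)) ((n + 1 : ℝ) * log x ^ n * x⁻¹) x := fun x hx => by
    simpa using (hasDerivAt_log (pos_of_mem_uIcc hε one_pos hx).ne').fun_pow (n + 1)
  have hu' : IntervalIntegrable (fun x => (n + 1 : ℝ) * log x ^ n * x⁻¹) volume ε 1 := by
    refine ((intervalIntegrable_rpow_mul_log_pow (-1) n hε one_pos).const_mul (n + 1 : ℝ)).congr
      fun x _ => ?_
    simp only [rpow_neg_one]
    ring
  have hv' : IntervalIntegrable (fun x => x ^ (-a - 1)) volume ε 1 := by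
    simpa using intervalIntegrable_rpow_mul_log_pow (-a - 1) 0 hε one_pos
  have parts := intervalIntegral.integral_mul_deriv_eq_deriv_mul hu
    (fun x hx => hasDerivAt_rpow_neg_div ha (pos_of_mem_uIcc hε one_pos hx)) hu' hv'
  have hrest : EqOn (fun x => (n + 1 : ℝ) * log x ^ n * x⁻¹ * (x ^ (-a) / -a))
      (fun x => -((n + 1) / a) * (x ^ (-a - 1) * log x ^ n)) (uIcc ε 1) := fun x hx => by
    simp only
    rw [sub_eq_add_neg, rpow_add (pos_of_mem_uIcc hε one_pos hx), rpow_neg_one]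
    field_simp
  simp_rw [mul_comm (_ ^ (-a - 1)) (log _ ^ (n + 1))]
  rw [parts, intervalIntegral.integral_congr hrest, intervalIntegral.integral_const_mul,
    log_one]
  field_simp
  ring

lemma exists_integral_rpow_mul_log_pow_eq {a : ℝ} (ha : a ≠ 0) (n : ℕ) :
    ∃ c : ℕ → ℝ, ∀ ε, 0 < ε → ∫ t in ε..1, t ^ (-a - 1) * log t ^ n =
      ∑ j ∈ Finset.range (n + 1), c j * ε ^ (-a) * log ε ^ j - n.factorial / a ^ (n + 1) := by
  induction n with
  | zero =>
    refine ⟨fun _ => 1 / a, fun ε hε => ?_⟩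
    simp only [pow_zero, mul_one, integral_rpow_neg_sub_one ha hε, zero_add,
      Finset.sum_range_one, Nat.factorial_zero, Nat.cast_one, pow_one]
    field_simp
  | succ n ih =>
    obtain ⟨c, hc⟩ := ih
    refine ⟨fun j => if j = n + 1 then 1 / a else (n + 1) / a * c j, fun ε hε => ?_⟩
    have hsum : ∑ j ∈ Finset.range (n + 1),
        (if j = n + 1 then 1 / a else (n + 1) / a * c j) * ε ^ (-a) * log ε ^ j =
          (n + 1) / a * ∑ j ∈ Finset.range (n + 1), c j * ε ^ (-a) * log ε ^ j := by
      rw [Finset.mul_sum]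
      refine Finset.sum_congr rfl fun j hj => ?_
      rw [if_neg (Finset.mem_range.mp hj).ne]
      ring
    rw [integral_rpow_mul_log_pow_succ ha hε, hc ε hε, Finset.sum_range_succ _ (n + 1), hsum]
    simp only [↓reduceIte, Nat.factorial_succ, Nat.cast_mul, Nat.cast_succ]
    field_simp
    ring

lemma negligible_sum_rpow_mul_log_pow {l : ℝ} (hl : l < 0) (c : ℕ → ℝ) (n : ℕ) :
    Negligible fun ε => ∑ j ∈ Finset.range n, c j * ε ^ l * log ε ^ j := by
  have hinj : Set.InjOn (fun j : ℕ => (l, j)) (Finset.range n) := fun _ _ _ _ h =>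
    (Prod.ext_iff.mp h).2
  refine ⟨(Finset.range n).image fun j => (l, j), fun p => c p.2, ∅, fun _ => 0, ?_, by simp,
    fun ε => by simp [Finset.sum_image hinj]⟩
  simpa using fun _ _ => hl

lemma NeutrixLim.of_eventually_eq_add {F N : ℝ → ℝ} {c : ℝ} (hN : Negligible N)
    (h : ∀ᶠ ε in 𝓝[>] 0, F ε = N ε + c) : NeutrixLim F c :=
  ⟨N, hN, tendsto_const_nhds.congr' (h.mono fun _ hε => eq_sub_of_add_eq' hε.symm)⟩

theorem stmt0_general (m n : ℕ) (hm : 1 ≤ m) :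
    NeutrixLim (fun ε => ∫ t in Set.Ioo ε 1, t ^ (-(m : ℝ) - 1) * Real.log t ^ n)
      (-(n.factorial : ℝ) / (m : ℝ) ^ (n + 1)) := by
  have ha : (0 : ℝ) < m := by exact_mod_cast hm
  obtain ⟨c, hc⟩ := exists_integral_rpow_mul_log_pow_eq ha.ne' n
  refine NeutrixLim.of_eventually_eq_add
    (negligible_sum_rpow_mul_log_pow (neg_lt_zero.mpr ha) c (n + 1)) ?_
  filter_upwards [Ioo_mem_nhdsGT one_pos] with ε hε
  rw [← integral_Ioc_eq_integral_Ioo, ← intervalIntegral.integral_of_le hε.2.le, hc ε hε.1]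
  ring

theorem stmt0 (m n : ℕ) (hm : 1 ≤ m) (hn : 1 ≤ n) :
    NeutrixLim (fun ε => ∫ t in Set.Ioo ε 1, t ^ (-(m : ℝ) - 1) * Real.log t ^ n)
      (-(n.factorial : ℝ) / (m : ℝ) ^ (n + 1)) :=
  stmt0_general m n hm
end

section
/- For every real x and all integers n ≥ 0, r ≥ 0, the neutrix limit as ε → 0⁺ of ∫_{1/2}^{1−ε} (1−t)^x (log t)^n (log(1−t))^r dt exists; that is, there exist a real number c and a negligible function N(ε) such that ∫_{1/2}^{1−ε} (1−t)^x (log t)^n (log(1−t))^r dt − N(ε) tends to c as ε → 0⁺. -/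
open MeasureTheory Real Filter Set

/-!
Substituting `u = 1 - t` turns the integral into `∫_ε^{1/2} u^x (log u)^r f(u) du` with
`f(u) = log(1 - u)^n` smooth on `[0, 1/2]`. Replacing `f` by its Taylor polynomial of degree
`M ≥ -x` leaves a remainder `O(u^(M+1))`, whose contribution is integrable at `0` and therefore
converges. Each Taylor term `∫_ε^{1/2} u^(x+k) (log u)^r du` equals `H(1/2) - H(ε)` for an explicit
antiderivative `H`, a linear combination of functions `ε^λ (log ε)^j`, each of which is negligible,
constant, or tends to `0`.
-/

open scoped Topology ContDiff Nat

def HasNeutrixLimit (F : ℝ → ℝ) : Prop := ∃ c, NeutrixLim F c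

lemma negligible_zero : Negligible fun _ => 0 :=
  ⟨∅, fun _ => 0, ∅, fun _ => 0, by simp, by simp, by simp⟩

lemma Negligible.add {N₁ N₂ : ℝ → ℝ} (h₁ : Negligible N₁) (h₂ : Negligible N₂) :
    Negligible fun ε => N₁ ε + N₂ ε := by
  obtain ⟨s₁, c₁, T₁, d₁, hs₁, hT₁, hN₁⟩ := h₁
  obtain ⟨s₂, c₂, T₂, d₂, hs₂, hT₂, hN₂⟩ := h₂
  refine ⟨s₁ ∪ s₂, fun p => (if p ∈ s₁ then c₁ p else 0) + (if p ∈ s₂ then c₂ p else 0),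
    T₁ ∪ T₂, fun k => (if k ∈ T₁ then d₁ k else 0) + (if k ∈ T₂ then d₂ k else 0),
    fun p hp => (Finset.mem_union.1 hp).elim (hs₁ p) (hs₂ p),
    fun k hk => (Finset.mem_union.1 hk).elim (hT₁ k) (hT₂ k), fun ε => ?_⟩
  simp only [hN₁, hN₂, add_mul, ite_mul, zero_mul, Finset.sum_add_distrib, Finset.sum_ite_mem,
    Finset.union_inter_cancel_left, Finset.union_inter_cancel_right]
  ring

lemma Negligible.const_mul {N : ℝ → ℝ} (a : ℝ) (h : Negligible N) :
    Negligible fun ε => a * N ε := by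
  obtain ⟨s, c, T, d, hs, hT, hN⟩ := h
  refine ⟨s, fun p => a * c p, T, fun k => a * d k, hs, hT, fun ε => ?_⟩
  simp only [hN, mul_add, Finset.mul_sum, mul_assoc]

lemma negligible_rpow_mul_log_pow {lam : ℝ} (hlam : lam < 0) (k : ℕ) :
    Negligible fun ε => ε ^ lam * Real.log ε ^ k :=
  ⟨{(lam, k)}, fun _ => 1, ∅, fun _ => 0, by simpa using hlam, by simp, by simp⟩

lemma negligible_log_pow {k : ℕ} (hk : 1 ≤ k) : Negligible fun ε => Real.log ε ^ k :=
  ⟨∅, fun _ => 0, {k}, fun _ => 1, by simp, by simpa using hk, by simp⟩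

namespace HasNeutrixLimit

lemma of_tendsto {F : ℝ → ℝ} {c : ℝ} (h : Tendsto F (𝓝[>] 0) (𝓝 c)) : HasNeutrixLimit F :=
  ⟨c, fun _ => 0, negligible_zero, by simpa using h⟩

lemma of_negligible {N : ℝ → ℝ} (h : Negligible N) : HasNeutrixLimit N :=
  ⟨0, N, h, by simp⟩

lemma const (a : ℝ) : HasNeutrixLimit fun _ => a := of_tendsto tendsto_const_nhds

lemma congr {F G : ℝ → ℝ} (hG : HasNeutrixLimit G) (h : F =ᶠ[𝓝[>] 0] G) :
    HasNeutrixLimit F := by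
  obtain ⟨c, N, hN, ht⟩ := hG
  exact ⟨c, N, hN, ht.congr' (h.mono fun ε hε => by simp only [hε])⟩

lemma add {F G : ℝ → ℝ} (hF : HasNeutrixLimit F) (hG : HasNeutrixLimit G) :
    HasNeutrixLimit fun ε => F ε + G ε := by
  obtain ⟨c, N₁, hN₁, h₁⟩ := hF
  obtain ⟨d, N₂, hN₂, h₂⟩ := hG
  exact ⟨c + d, _, hN₁.add hN₂, by convert h₁.add h₂ using 2; ring⟩

lemma const_mul {F : ℝ → ℝ} (a : ℝ) (hF : HasNeutrixLimit F) :
    HasNeutrixLimit fun ε => a * F ε := by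
  obtain ⟨c, N, hN, h⟩ := hF
  exact ⟨a * c, _, hN.const_mul a, by convert h.const_mul a using 2; ring⟩

lemma sum {ι : Type*} (s : Finset ι) {F : ι → ℝ → ℝ} (h : ∀ i ∈ s, HasNeutrixLimit (F i)) :
    HasNeutrixLimit fun ε => ∑ i ∈ s, F i ε := by
  classical
  induction s using Finset.induction_on with
  | empty => simpa using const 0
  | insert a s ha ih =>
    simp only [Finset.sum_insert ha]
    exact (h a (s.mem_insert_self a)).add (ih fun i hi => h i (Finset.mem_insert_of_mem hi))

end HasNeutrixLimit

lemma tendsto_rpow_mul_log_pow_nhdsGT_zero {lam : ℝ} (hlam : 0 < lam) (k : ℕ) :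
    Tendsto (fun ε => ε ^ lam * Real.log ε ^ k) (𝓝[>] 0) (𝓝 0) := by
  have h := (isLittleO_abs_log_rpow_rpow_nhdsGT_zero (k : ℝ)
    (neg_lt_zero.2 hlam)).tendsto_div_nhds_zero
  refine tendsto_zero_iff_norm_tendsto_zero.2 (h.congr' ?_)
  filter_upwards [self_mem_nhdsWithin] with ε (hε : 0 < ε)
  rw [rpow_neg hε.le, div_inv_eq_mul, rpow_natCast, norm_mul, norm_pow, Real.norm_eq_abs,
    Real.norm_eq_abs, abs_of_pos (rpow_pos_of_pos hε _), mul_comm]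

lemma HasNeutrixLimit.rpow_mul_log_pow (lam : ℝ) (k : ℕ) :
    HasNeutrixLimit fun ε => ε ^ lam * Real.log ε ^ k := by
  rcases lt_trichotomy lam 0 with hlam | rfl | hlam
  · exact .of_negligible (negligible_rpow_mul_log_pow hlam k)
  · simp only [rpow_zero, one_mul]
    rcases k.eq_zero_or_pos with rfl | hk
    · exact .const _
    · exact .of_negligible (negligible_log_pow hk)
  · exact .of_tendsto (tendsto_rpow_mul_log_pow_nhdsGT_zero hlam k)

lemma exists_hasDerivAt_rpow_mul_log_pow_of_ne {α : ℝ} (hα : α ≠ -1) (r : ℕ) :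
    ∃ H : ℝ → ℝ, HasNeutrixLimit H ∧
      ∀ u, 0 < u → HasDerivAt H (u ^ α * Real.log u ^ r) u := by
  have hα' : α + 1 ≠ 0 := fun h => hα (eq_neg_of_add_eq_zero_left h)
  induction r with
  | zero =>
    refine ⟨fun u => (α + 1)⁻¹ * u ^ (α + 1),
      by simpa using (HasNeutrixLimit.rpow_mul_log_pow (α + 1) 0).const_mul (α + 1)⁻¹,
      fun u hu => ?_⟩
    refine ((hasDerivAt_rpow_const (Or.inl hu.ne')).const_mul _).congr_deriv ?_
    rw [add_sub_cancel_right, pow_zero, mul_one, inv_mul_cancel_left₀ hα']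
  | succ r ih =>
    -- `(u^(α+1) log^(r+1) u)' = (α+1) u^α log^(r+1) u + (r+1) u^α log^r u`
    obtain ⟨H, hH, hH'⟩ := ih
    refine ⟨fun u => (α + 1)⁻¹ * (u ^ (α + 1) * Real.log u ^ (r + 1)) - (r + 1) / (α + 1) * H u,
      by simpa only [sub_eq_add_neg, neg_mul] using
        ((HasNeutrixLimit.rpow_mul_log_pow _ _).const_mul _).add (hH.const_mul (-_)),
      fun u hu => ?_⟩
    refine ((((hasDerivAt_rpow_const (Or.inl hu.ne')).mul
      ((hasDerivAt_log hu.ne').fun_pow (r + 1))).const_mul _).sub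
      ((hH' u hu).const_mul _)).congr_deriv ?_
    rw [add_sub_cancel_right, Nat.add_sub_cancel, rpow_add_one hu.ne']
    field_simp
    push_cast
    ring

lemma exists_hasDerivAt_rpow_mul_log_pow (α : ℝ) (r : ℕ) :
    ∃ H : ℝ → ℝ, HasNeutrixLimit H ∧
      ∀ u, 0 < u → HasDerivAt H (u ^ α * Real.log u ^ r) u := by
  rcases ne_or_eq α (-1) with hα | rfl
  · exact exists_hasDerivAt_rpow_mul_log_pow_of_ne hα r
  refine ⟨fun u => ((r : ℝ) + 1)⁻¹ * Real.log u ^ (r + 1),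
    by simpa using (HasNeutrixLimit.rpow_mul_log_pow 0 (r + 1)).const_mul ((r : ℝ) + 1)⁻¹,
    fun u hu => ?_⟩
  refine (((hasDerivAt_log hu.ne').fun_pow (r + 1)).const_mul _).congr_deriv ?_
  rw [Nat.add_sub_cancel, rpow_neg_one]
  field_simp
  push_cast
  ring

lemma continuousOn_rpow_mul_log_pow (α : ℝ) (r : ℕ) :
    ContinuousOn (fun u => u ^ α * Real.log u ^ r) (Ioi 0) := fun u (hu : 0 < u) =>
  ((continuousAt_rpow_const u α (Or.inl hu.ne')).mul
    ((continuousAt_log hu.ne').pow r)).continuousWithinAt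

lemma setIntegral_Ioo_eq_intervalIntegral (f : ℝ → ℝ) {a b : ℝ} (hab : a ≤ b) :
    ∫ u in Ioo a b, f u = ∫ u in a..b, f u := by
  rw [intervalIntegral.integral_of_le hab, integral_Ioc_eq_integral_Ioo]

lemma HasNeutrixLimit.setIntegral_rpow_mul_log_pow (α : ℝ) (r : ℕ) {b : ℝ} (hb : 0 < b) :
    HasNeutrixLimit fun ε => ∫ u in Ioo ε b, u ^ α * Real.log u ^ r := by
  obtain ⟨H, hH, hH'⟩ := exists_hasDerivAt_rpow_mul_log_pow α r
  refine ((HasNeutrixLimit.const (H b)).add (hH.const_mul (-1))).congr ?_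
  filter_upwards [Ioo_mem_nhdsGT hb] with ε hε
  have hpos : Icc ε b ⊆ Ioi 0 := fun u hu => hε.1.trans_le hu.1
  rw [setIntegral_Ioo_eq_intervalIntegral _ hε.2.le, intervalIntegral.integral_eq_sub_of_hasDerivAt
    (fun u hu => hH' u (hpos (uIcc_of_le hε.2.le ▸ hu)))
    ((continuousOn_rpow_mul_log_pow α r).mono (uIcc_of_le hε.2.le ▸ hpos)).intervalIntegrable]
  ring

lemma tendsto_setIntegral_Ioo_nhdsGT {f : ℝ → ℝ} {a b : ℝ} (hab : a < b)
    (hf : IntegrableOn f (Ioo a b)) :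
    Tendsto (fun ε => ∫ u in Ioo ε b, f u) (𝓝[>] a) (𝓝 (∫ u in Ioo a b, f u)) := by
  have h := intervalIntegral.continuousOn_primitive_interval_left (μ := volume) (f := f)
    (a := a) (b := b) (by rwa [uIcc_of_le hab.le, integrableOn_Icc_iff_integrableOn_Ioo])
    a left_mem_uIcc
  rw [uIcc_of_le hab.le] at h
  have h' := (h.mono Ioo_subset_Icc_self).tendsto
  rw [nhdsWithin_Ioo_eq_nhdsGT hab, ← setIntegral_Ioo_eq_intervalIntegral _ hab.le] at h'
  refine h'.congr' ?_
  filter_upwards [Ioo_mem_nhdsGT hab] with ε hε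
  exact (setIntegral_Ioo_eq_intervalIntegral _ hε.2.le).symm

lemma exists_bound_rpow_mul_log_pow {β : ℝ} (hβ : 0 < β) (r : ℕ) (b : ℝ) :
    ∃ K, ∀ u ∈ Icc 0 b, ‖u ^ β * Real.log u ^ r‖ ≤ K := by
  refine isCompact_Icc.exists_bound_of_continuousOn fun u hu => ?_
  rcases hu.1.eq_or_lt with rfl | hu₀
  · -- at `0` the value is `0 ^ β * log 0 ^ r = 0`, matching the limit from the right
    have h : ContinuousWithinAt (fun u => u ^ β * Real.log u ^ r) (Ioi 0) 0 := by
      simpa [ContinuousWithinAt, zero_rpow hβ.ne'] using tendsto_rpow_mul_log_pow_nhdsGT_zero hβ r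
    exact (continuousWithinAt_Ioi_iff_Ici.1 h).mono Icc_subset_Ici_self
  · exact ((continuousOn_rpow_mul_log_pow β r).continuousWithinAt hu₀).mono_of_mem_nhdsWithin
      (mem_nhdsWithin_of_mem_nhds (Ioi_mem_nhds hu₀))

lemma integrableOn_rpow_mul_log_pow_mul {α : ℝ} {r M : ℕ} {h : ℝ → ℝ} {b C : ℝ}
    (hαM : 0 < α + M) (hh : ContinuousOn h (Ioo 0 b)) (hC : ∀ u ∈ Ioo 0 b, ‖h u‖ ≤ C * u ^ M) :
    IntegrableOn (fun u => u ^ α * Real.log u ^ r * h u) (Ioo 0 b) := by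
  obtain ⟨K, hK⟩ := exists_bound_rpow_mul_log_pow hαM r b
  refine IntegrableOn.of_bound measure_Ioo_lt_top
    ((((continuousOn_rpow_mul_log_pow α r).mono fun u hu => hu.1).mul hh).aestronglyMeasurable
      measurableSet_Ioo) (|C| * K) ?_
  filter_upwards [ae_restrict_mem measurableSet_Ioo] with u hu
  have hu₀ : 0 ≤ u := hu.1.le
  calc ‖u ^ α * Real.log u ^ r * h u‖
      ≤ ‖u ^ α * Real.log u ^ r‖ * (C * u ^ M) := by
        rw [norm_mul]; exact mul_le_mul_of_nonneg_left (hC u hu) (norm_nonneg _)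
    _ = C * ‖u ^ (α + M) * Real.log u ^ r‖ := by
        rw [rpow_add hu.1, rpow_natCast, norm_mul, norm_mul, norm_mul,
          norm_of_nonneg (pow_nonneg hu₀ M)]
        ring
    _ ≤ |C| * K := by
        gcongr
        · exact le_abs_self C
        · exact hK u (Ioo_subset_Icc_self hu)

lemma HasNeutrixLimit.setIntegral_rpow_mul_log_pow_mul {f : ℝ → ℝ} {b : ℝ} (hb : 0 < b)
    (hf : ContDiffOn ℝ ∞ f (Icc 0 b)) (α : ℝ) (r : ℕ) :
    HasNeutrixLimit fun ε => ∫ u in Ioo ε b, u ^ α * Real.log u ^ r * f u := by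
  -- `M` is chosen so that the Taylor remainder `O(u^(M+1))` makes the integrand integrable at `0`.
  set M := ⌈-α⌉₊
  have hαM : 0 < α + ((M + 1 : ℕ) : ℝ) := by push_cast; linarith [Nat.le_ceil (-α)]
  obtain ⟨C, hC⟩ := exists_taylor_mean_remainder_bound (n := M) hb.le
    (hf.of_le (by exact_mod_cast le_top))
  set a : ℕ → ℝ := fun k => (k ! : ℝ)⁻¹ * iteratedDerivWithin k f (Icc 0 b) 0
  set P : ℝ → ℝ := fun u => ∑ k ∈ Finset.range (M + 1), a k * u ^ k
  have hP : taylorWithinEval f M (Icc 0 b) 0 = P := by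
    ext u
    simp only [taylor_within_apply, sub_zero, smul_eq_mul, P, a]
    exact Finset.sum_congr rfl fun k _ => by ring
  have hR : IntegrableOn (fun u => u ^ α * Real.log u ^ r * (f u - P u)) (Ioo 0 b) :=
    integrableOn_rpow_mul_log_pow_mul hαM
      ((hf.continuousOn.mono Ioo_subset_Icc_self).sub (by fun_prop))
      fun u hu => by simpa [hP] using hC u (Ioo_subset_Icc_self hu)
  refine ((HasNeutrixLimit.sum (Finset.range (M + 1)) fun k _ =>
      (HasNeutrixLimit.setIntegral_rpow_mul_log_pow (α + k) r hb).const_mul (a k)).add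
    (.of_tendsto (tendsto_setIntegral_Ioo_nhdsGT hb hR))).congr ?_
  filter_upwards [Ioo_mem_nhdsGT hb] with ε hε
  have hmono : ∀ β : ℝ, IntegrableOn (fun u => u ^ β * Real.log u ^ r) (Ioo ε b) := fun β =>
    (((continuousOn_rpow_mul_log_pow β r).mono fun u hu => hε.1.trans_le hu.1).integrableOn_Icc
      ).mono_set Ioo_subset_Icc_self
  have hsplit : ∀ u ∈ Ioo ε b, u ^ α * Real.log u ^ r * f u =
      ∑ k ∈ Finset.range (M + 1), a k * (u ^ (α + k) * Real.log u ^ r) +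
        u ^ α * Real.log u ^ r * (f u - P u) := fun u hu => by
    have hpoly : ∑ k ∈ Finset.range (M + 1), a k * (u ^ (α + k) * Real.log u ^ r) =
        u ^ α * Real.log u ^ r * P u := by
      simp only [P, Finset.mul_sum, rpow_add (hε.1.trans hu.1), rpow_natCast]
      exact Finset.sum_congr rfl fun k _ => by ring
    rw [hpoly]
    ring
  rw [setIntegral_congr_fun measurableSet_Ioo hsplit,
    integral_add (integrable_finsetSum _ fun k _ => (hmono _).const_mul _)
      (hR.mono_set (Ioo_subset_Ioo_left hε.1.le)),
    integral_finsetSum _ fun k _ => (hmono _).const_mul _]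
  simp only [integral_const_mul]

lemma setIntegral_Ioo_comp_const_sub (f : ℝ → ℝ) (c a b : ℝ) :
    ∫ t in Ioo a b, f (c - t) = ∫ u in Ioo (c - b) (c - a), f u := by
  have h := (volume.measurePreserving_sub_left c).setIntegral_preimage_emb
    (Homeomorph.subLeft c).measurableEmbedding f (Ioo (c - b) (c - a))
  rwa [preimage_const_sub_Ioo, sub_sub_cancel, sub_sub_cancel] at h

lemma contDiffOn_log_one_sub_pow (n : ℕ) :
    ContDiffOn ℝ ∞ (fun u => Real.log (1 - u) ^ n) (Iio 1) :=
  (contDiffOn_log.comp (contDiffOn_const.sub contDiffOn_id) fun u (hu : u < 1) =>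
    (sub_pos.2 hu).ne').pow n

theorem stmt7 (x : ℝ) (n r : ℕ) :
    ∃ c : ℝ, NeutrixLim (fun ε => ∫ t in Set.Ioo (1/2 : ℝ) (1 - ε),
      (1 - t) ^ x * Real.log t ^ n * Real.log (1 - t) ^ r) c := by
  have h := HasNeutrixLimit.setIntegral_rpow_mul_log_pow_mul (by norm_num : (0 : ℝ) < 1 / 2)
    ((contDiffOn_log_one_sub_pow n).mono fun u hu => hu.2.trans_lt (by norm_num)) x r
  refine h.congr (Eventually.of_forall fun ε => ?_)
  have hsub := setIntegral_Ioo_comp_const_sub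
    (fun u => u ^ x * Real.log u ^ r * Real.log (1 - u) ^ n) 1 (1 / 2) (1 - ε)
  rw [sub_sub_cancel, show (1 : ℝ) - 1 / 2 = 1 / 2 by norm_num] at hsub
  refine (setIntegral_congr_fun measurableSet_Ioo fun t _ => ?_).trans hsub
  simp only [sub_sub_cancel]
  ring
end
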